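/- Let G be a finite group of order n generated by a nonempty subset S with e ∉ S and S = S⁻¹. Then the signed domination number of the Cayley graph Cay(S:G) equals n if and only if G is isomorphic to the cyclic group ℤ₂ of order 2. -/

import Mathlib

/-!
`Cay(S:G)` is `|S|`-regular. If `|S| ≥ 2`, giving `-1` to a single vertex is a signed dominating
function, since every closed neighbourhood has at least three vertices and contains at most one
`-1`; so `γ_S < n`, while `n ≥ |S| + 1 ≥ 3`. If `S = {x}`, every closed neighbourhood has two
vertices, which forces every signed dominating function to be constantly `1`, so `γ_S = n`;
and `x` is an involution generating `G`, so `G ≅ ℤ₂`.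
-/

/-- The Cayley graph `Cay(S:G)` of a group `G` with connection set `S`:
vertices are the group elements, and `a`, `b` are adjacent iff `a * b⁻¹ ∈ S`
(for an inverse-closed `S` not containing the identity). -/
def cayleyGraph {G : Type*} [Group G] (S : Set G) : SimpleGraph G :=
  SimpleGraph.fromRel (fun a b => a * b⁻¹ ∈ S)

open Classical in
/-- The signed domination number of a finite simple graph: the minimum weight
`∑ v, g v` over all signed dominating functions, i.e. functions `g : V → {±1}`
whose sum over every closed neighborhood `N[v]` is positive. -/
noncomputable def signedDomNum {V : Type*} [Fintype V] (Γ : SimpleGraph V) : ℤ :=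
  sInf {w : ℤ | ∃ g : V → ℤ, (∀ v, g v = 1 ∨ g v = -1) ∧
    (∀ v : V, 0 < g v + ∑ u : V, if Γ.Adj v u then g u else 0) ∧
    w = ∑ v : V, g v}

open Finset

section SignedDomination

open scoped Classical

variable {V : Type*} [Fintype V] {Γ : SimpleGraph V}

namespace SimpleGraph

def IsSignedDominating (Γ : SimpleGraph V) (g : V → ℤ) : Prop :=
  (∀ v, g v = 1 ∨ g v = -1) ∧ ∀ v, 0 < g v + ∑ u, if Γ.Adj v u then g u else 0

theorem sum_ite_adj_eq_sum_neighborFinset (v : V) (f : V → ℤ) :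
    (∑ u, if Γ.Adj v u then f u else 0) = ∑ u ∈ Γ.neighborFinset v, f u := by
  rw [← sum_filter, neighborFinset_eq_filter]

theorem isSignedDominating_one : Γ.IsSignedDominating 1 := by
  refine ⟨fun _ => Or.inl rfl, fun v => ?_⟩
  rw [sum_ite_adj_eq_sum_neighborFinset]
  simp only [Pi.one_apply, sum_const, card_neighborFinset_eq_degree, nsmul_eq_mul, mul_one]
  positivity

theorem IsSignedDominating.neg_card_le_sum {g : V → ℤ} (hg : Γ.IsSignedDominating g) :
    -(Fintype.card V : ℤ) ≤ ∑ v, g v := by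
  have : ∀ v, (-1 : ℤ) ≤ g v := fun v => by rcases hg.1 v with h | h <;> omega
  simpa using sum_le_sum fun v (_ : v ∈ univ) => this v

theorem signedDomNum_eq_sInf :
    signedDomNum Γ = sInf {w | ∃ g, Γ.IsSignedDominating g ∧ w = ∑ v, g v} := by
  simp only [signedDomNum, IsSignedDominating, and_assoc]

theorem signedDomNum_le {g : V → ℤ} (hg : Γ.IsSignedDominating g) :
    signedDomNum Γ ≤ ∑ v, g v := by
  rw [signedDomNum_eq_sInf]
  refine csInf_le ⟨-(Fintype.card V : ℤ), ?_⟩ ⟨g, hg, rfl⟩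
  rintro w ⟨g', hg', rfl⟩
  exact hg'.neg_card_le_sum

theorem le_signedDomNum {w : ℤ} (h : ∀ g, Γ.IsSignedDominating g → w ≤ ∑ v, g v) :
    w ≤ signedDomNum Γ := by
  rw [signedDomNum_eq_sInf]
  refine le_csInf ⟨_, 1, isSignedDominating_one, rfl⟩ ?_
  rintro _ ⟨g, hg, rfl⟩
  exact h g hg

theorem IsSignedDominating.eq_one_of_degree_le_one {g : V → ℤ} (hg : Γ.IsSignedDominating g)
    {v : V} (hv : Γ.degree v ≤ 1) : g v = 1 := by
  have hsum : ∑ u ∈ Γ.neighborFinset v, g u ≤ ∑ u ∈ Γ.neighborFinset v, 1 :=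
    sum_le_sum fun u _ => by rcases hg.1 u with h | h <;> omega
  have hpos := hg.2 v
  rw [sum_ite_adj_eq_sum_neighborFinset] at hpos
  simp only [sum_const, card_neighborFinset_eq_degree, nsmul_eq_mul, mul_one] at hsum
  rcases hg.1 v with h | h <;> omega

theorem signedDomNum_eq_card_of_degree_le_one (h : ∀ v, Γ.degree v ≤ 1) :
    signedDomNum Γ = Fintype.card V := by
  refine le_antisymm ?_ (le_signedDomNum fun g hg => ?_)
  · simpa using signedDomNum_le (isSignedDominating_one (Γ := Γ))
  · simp [sum_congr rfl fun v _ => hg.eq_one_of_degree_le_one (h v)]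

theorem signedDomNum_le_card_sub_two (v₀ : V) (h : ∀ v, 2 ≤ Γ.degree v) :
    signedDomNum Γ ≤ Fintype.card V - 2 := by
  set g : V → ℤ := fun v => 1 - if v = v₀ then 2 else 0
  have hsum (s : Finset V) : ∑ v ∈ s, g v = #s - if v₀ ∈ s then 2 else 0 := by
    simp [g, sum_sub_distrib]
  have hg : Γ.IsSignedDominating g := by
    refine ⟨fun v => by by_cases hv : v = v₀ <;> simp [g, hv], fun v => ?_⟩
    have hv := Γ.notMem_neighborFinset_self v
    have h2 : (2 : ℤ) ≤ Γ.degree v := by exact_mod_cast h v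
    rw [sum_ite_adj_eq_sum_neighborFinset, ← sum_insert hv, hsum, card_insert_of_notMem hv,
      card_neighborFinset_eq_degree]
    split_ifs <;> push_cast <;> omega
  simpa [hsum] using signedDomNum_le hg

end SimpleGraph

end SignedDomination

section Cayley

variable {G : Type*} [Group G] {S : Set G}

theorem cayleyGraph_adj_iff (he : (1 : G) ∉ S) (hinv : S⁻¹ = S) {a b : G} :
    (cayleyGraph S).Adj a b ↔ a * b⁻¹ ∈ S := by
  have hsymm : b * a⁻¹ ∈ S ↔ a * b⁻¹ ∈ S := by
    rw [← Set.inv_mem_inv, hinv, mul_inv_rev, inv_inv]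
  rw [cayleyGraph, SimpleGraph.fromRel_adj, hsymm, or_self, and_iff_right_iff_imp]
  rintro h rfl
  exact he (by simpa using h)

theorem cayleyGraph_neighborSet (he : (1 : G) ∉ S) (hinv : S⁻¹ = S) (a : G) :
    (cayleyGraph S).neighborSet a = (fun s => s⁻¹ * a) '' S := by
  ext b
  rw [SimpleGraph.mem_neighborSet, cayleyGraph_adj_iff he hinv, Set.mem_image]
  constructor
  · exact fun h => ⟨_, h, by group⟩
  · rintro ⟨s, hs, rfl⟩
    simpa using hs

open scoped Classical in
theorem cayleyGraph_degree [Fintype G] (he : (1 : G) ∉ S) (hinv : S⁻¹ = S) (a : G) :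
    (cayleyGraph S).degree a = S.ncard := by
  rw [← SimpleGraph.card_neighborSet_eq_degree, ← Nat.card_eq_fintype_card,
    Nat.card_coe_set_eq, cayleyGraph_neighborSet he hinv,
    Set.ncard_image_of_injective _ fun s t h => inv_injective (mul_right_cancel h)]

end Cayley

theorem nonempty_mulEquiv_multiplicative_zmod_iff {G : Type*} [Group G] {p : ℕ}
    [Fact p.Prime] : Nonempty (G ≃* Multiplicative (ZMod p)) ↔ Nat.card G = p :=
  ⟨fun ⟨e⟩ => by simp [Nat.card_congr e.toEquiv],
    fun h => ⟨mulEquivOfPrimeCardEq h (by simp)⟩⟩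

theorem Nat.card_eq_two_of_closure_singleton_eq_top {G : Type*} [Group G] {x : G}
    (hx : x ≠ 1) (hx2 : x⁻¹ = x) (h : Subgroup.closure {x} = ⊤) : Nat.card G = 2 := by
  have hord : orderOf x = 2 :=
    orderOf_eq_prime (by rw [sq]; nth_rw 2 [← hx2]; exact mul_inv_cancel x) hx
  rw [← hord, orderOf_eq_card_of_forall_mem_zpowers]
  intro y
  rw [Subgroup.zpowers_eq_closure, h]
  trivial

theorem stmt_7 {G : Type*} [Group G] [Fintype G] (n : ℕ)
    (hn : Fintype.card G = n) (S : Set G) (hne : S.Nonempty)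
    (hgen : Subgroup.closure S = ⊤) (he : (1 : G) ∉ S) (hinv : S⁻¹ = S) :
    signedDomNum (cayleyGraph S) = (n : ℤ) ↔
      Nonempty (G ≃* Multiplicative (ZMod 2)) := by
  classical
  have hdeg := cayleyGraph_degree he hinv
  rw [nonempty_mulEquiv_multiplicative_zmod_iff, Nat.card_eq_fintype_card, ← hn]
  rcases Nat.lt_or_ge S.ncard 2 with hS | hS
  · obtain ⟨x, rfl⟩ : ∃ x, S = {x} :=
      Set.ncard_eq_one.1 (by have := (Set.ncard_pos).2 hne; omega)
    have hcard : Fintype.card G = 2 := by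
      rw [← Nat.card_eq_fintype_card]
      exact Nat.card_eq_two_of_closure_singleton_eq_top (Ne.symm (by simpa using he))
        (by simpa using hinv) hgen
    have hdeg1 : ∀ v, (cayleyGraph {x}).degree v ≤ 1 := fun v => (hdeg v).trans_le (by simp)
    simp [SimpleGraph.signedDomNum_eq_card_of_degree_le_one hdeg1, hcard]
  · have hlt := SimpleGraph.signedDomNum_le_card_sub_two 1 fun v => hdeg v ▸ hS
    have hcard : S.ncard < Fintype.card G := by
      rw [← Nat.card_eq_fintype_card]
      exact Set.ncard_lt_card fun h => he (h ▸ trivial)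
    constructor <;> intro h <;> omega
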